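/- arXiv:math/0410179 — 3 statements merged into one kernel-verified Lean document; each statement's English description precedes it below -/
import Mathlib

section
/- Let p and p' be positive integers, let q be an integer coprime to p and q' an integer coprime to p'. Then Z_k(p,q) = Z_k(p',q') for every natural number k if and only if p = p' and there exists an integer a such that q·q' ≡ a² (mod p). (This is the number-theoretic content of the theorem that the U(1) homotopy Dijkgraaf–Witten invariants distinguish homotopy equivalence classes of lens spaces, since Z_k(p,q̄) with q̄q ≡ 1 (mod p) is the level-k invariant of L(p,q) and two lens spaces L(p,q), L(p',q') are orientation-preservingly homotopy equivalent iff p = p' and qq' ≡ a² (mod p) for some integer a.) -/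
open Complex Finset

/-- The normalized Gauss sum `Z_k(p,q) = (1/p) · ∑_{l=1}^p exp(2πi·k·q·l²/p)`. -/
noncomputable def dwInvariant (k : ℕ) (p : ℕ) (q : ℤ) : ℂ :=
  (1 / (p : ℂ)) *
    ∑ l ∈ Finset.Icc 1 p,
      Complex.exp (2 * Real.pi * Complex.I * (k : ℂ) * (q : ℂ) * (l : ℂ) ^ 2 / (p : ℂ))

/-!
With `G(a) = ∑_{x : ℤ/p} e(a x² / p)` one has `Z_k(p,q) = G(kq) / p`. All terms of `G` have
modulus one, so `Z_k(p,q) = 1` exactly when `p ∣ k`; hence the invariants determine `p`.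
For fixed `p`, `k ↦ G(ka)` is the discrete Fourier transform of the counting function
`b ↦ #{x | a x² = b}`, so by Fourier inversion the invariants of `q` and `q'` agree iff these
counting functions agree. Since `q x² = q` has the solution `x = 1`, so then does `q' x² = q`,
and `q q' = (q' x)²`. Conversely, if `q q' = c²` then `q' = q (c / q)²`, and the substitution
`x ↦ (c / q) x` turns `G(kq')` into `G(kq)`.
-/

lemma ZMod.sum_Icc_one_natCast {M : Type*} [AddCommMonoid M] (p : ℕ) [NeZero p]
    (f : ZMod p → M) : ∑ l ∈ Icc 1 p, f l = ∑ x, f x := by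
  have hinj : Set.InjOn (Nat.cast : ℕ → ZMod p) (Icc 1 p) := by
    intro a ha b hb hab
    simp only [coe_Icc, Set.mem_Icc] at ha hb
    refine ((ZMod.natCast_eq_natCast_iff a b p).1 hab).eq_of_abs_lt ?_
    rw [abs_sub_lt_iff]
    omega
  have himage : (Icc 1 p).image (Nat.cast : ℕ → ZMod p) = univ :=
    eq_univ_of_card _ (by rw [card_image_of_injOn hinj, Nat.card_Icc, ZMod.card]; rfl)
  rw [← sum_image hinj, himage]

lemma Complex.eq_one_of_re_eq_one {z : ℂ} (hz : ‖z‖ ≤ 1) (hre : z.re = 1) : z = 1 :=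
  Complex.ext hre <| abs_re_eq_norm.1 <| le_antisymm (abs_re_le_norm z) (by rw [hre]; simpa)

lemma Complex.forall_eq_one_of_sum_eq_card {ι : Type*} {s : Finset ι} {z : ι → ℂ}
    (hz : ∀ i ∈ s, ‖z i‖ ≤ 1) (hsum : ∑ i ∈ s, z i = #s) : ∀ i ∈ s, z i = 1 := by
  have hre_le : ∀ i ∈ s, (z i).re ≤ 1 := fun i hi => (re_le_norm _).trans (hz i hi)
  have hre_sum : ∑ i ∈ s, (z i).re = ∑ i ∈ s, (1 : ℝ) := by
    simpa [re_sum] using congrArg re hsum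
  exact fun i hi => eq_one_of_re_eq_one (hz i hi) ((sum_eq_sum_iff_of_le hre_le).1 hre_sum i hi)

namespace ZMod

open scoped ZMod

variable {N : ℕ} [NeZero N]

noncomputable def quadGaussSum (a : ZMod N) : ℂ := ∑ x, stdAddChar (a * x ^ 2)

lemma quadGaussSum_eq_card_iff {a : ZMod N} : quadGaussSum a = N ↔ a = 0 := by
  constructor
  · intro h
    have hnorm : ∀ x ∈ (univ : Finset (ZMod N)), ‖stdAddChar (a * x ^ 2)‖ ≤ 1 :=
      fun _ _ => by simp [stdAddChar_apply, Circle.norm_coe]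
    have hone := Complex.forall_eq_one_of_sum_eq_card hnorm
      (by rw [card_univ, ZMod.card]; exact h) 1 (mem_univ _)
    rw [one_pow, mul_one, ← AddChar.map_zero_eq_one (stdAddChar (N := N))] at hone
    exact injective_stdAddChar hone
  · rintro rfl
    simp [quadGaussSum]

lemma quadGaussSum_mul_sq {c : ZMod N} (hc : IsUnit c) (a : ZMod N) :
    quadGaussSum (a * c ^ 2) = quadGaussSum a :=
  Fintype.sum_bijective (c * ·) (IsUnit.isUnit_iff_mulLeft_bijective.1 hc) _ _ fun x => by ring_nf

def quadFiberCard (a b : ZMod N) : ℕ := #{x | a * x ^ 2 = b}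

lemma quadGaussSum_mul_eq_dft (a k : ZMod N) :
    quadGaussSum (k * a) = 𝓕 (fun b => (quadFiberCard a b : ℂ)) (-k) := by
  simp only [dft_apply, quadFiberCard, mul_neg, neg_neg, smul_eq_mul, quadGaussSum]
  rw [← sum_fiberwise univ (fun x => a * x ^ 2) (fun x => stdAddChar (k * a * x ^ 2))]
  refine sum_congr rfl fun b _ => ?_
  rw [card_eq_sum_ones, Nat.cast_sum, mul_sum]
  refine sum_congr rfl fun x hx => ?_
  rw [(mem_filter.1 hx).2.symm]
  ring_nf

lemma quadFiberCard_eq_of_forall_quadGaussSum_eq {a b : ZMod N}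
    (h : ∀ k, quadGaussSum (k * a) = quadGaussSum (k * b)) :
    quadFiberCard a = quadFiberCard b := by
  have hdft :
      𝓕 (fun c => (quadFiberCard a c : ℂ)) = 𝓕 (fun c => (quadFiberCard b c : ℂ)) := by
    funext k
    rw [← neg_neg k, ← quadGaussSum_mul_eq_dft, ← quadGaussSum_mul_eq_dft]
    exact h _
  funext c
  exact_mod_cast congrFun (dft.injective hdft) c

lemma exists_mul_eq_sq_of_quadFiberCard_eq {a b : ZMod N} (h : quadFiberCard a = quadFiberCard b) :
    ∃ c, a * b = c ^ 2 := by
  have hpos : 0 < quadFiberCard b a := by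
    rw [← h]
    exact card_pos.2 ⟨1, by simp⟩
  obtain ⟨x, hx⟩ := card_pos.1 hpos
  exact ⟨b * x, by rw [← (mem_filter.1 hx).2]; ring⟩

lemma forall_quadGaussSum_mul_eq_iff {u v : ZMod N} (hu : IsUnit u) (hv : IsUnit v) :
    (∀ k, quadGaussSum (k * u) = quadGaussSum (k * v)) ↔ ∃ c, u * v = c ^ 2 := by
  refine ⟨fun h => exists_mul_eq_sq_of_quadFiberCard_eq
    (quadFiberCard_eq_of_forall_quadGaussSum_eq h), ?_⟩
  rintro ⟨c, hc⟩ k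
  have hc_unit : IsUnit c := (isUnit_pow_iff two_ne_zero).1 (hc ▸ hu.mul hv)
  set w : ZMod N := ↑hu.unit⁻¹
  have hv_eq : v = u * (w * c) ^ 2 := by
    linear_combination (u * w ^ 2) * hc - v * (1 + u * w) * hu.mul_val_inv
  rw [hv_eq, ← mul_assoc, quadGaussSum_mul_sq ((hu.unit⁻¹).isUnit.mul hc_unit)]

end ZMod

open ZMod

lemma dwInvariant_eq_inv_mul_quadGaussSum {p : ℕ} [NeZero p] (k : ℕ) (q : ℤ) :
    dwInvariant k p q = (p : ℂ)⁻¹ * quadGaussSum ((k : ZMod p) * (q : ZMod p)) := by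
  rw [dwInvariant, one_div, quadGaussSum, ← sum_Icc_one_natCast]
  congr 1
  refine sum_congr rfl fun l _ => ?_
  have hcast : (k : ZMod p) * q * (l : ZMod p) ^ 2 = ((k * q * l ^ 2 : ℤ) : ZMod p) := by
    push_cast; rfl
  rw [hcast, stdAddChar_coe]
  push_cast
  ring_nf

lemma dwInvariant_eq_one_iff {p k : ℕ} {q : ℤ} (hp : 0 < p) (hq : IsCoprime q p) :
    dwInvariant k p q = 1 ↔ p ∣ k := by
  have := NeZero.of_pos hp
  rw [dwInvariant_eq_inv_mul_quadGaussSum, inv_mul_eq_one₀ (NeZero.ne _), eq_comm,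
    quadGaussSum_eq_card_iff, ((coe_int_isUnit_iff_isCoprime q p).2 hq.symm).mul_left_eq_zero,
    ZMod.natCast_eq_zero_iff]

lemma forall_dwInvariant_eq_iff {p : ℕ} [NeZero p] (q q' : ℤ) :
    (∀ k : ℕ, dwInvariant k p q = dwInvariant k p q') ↔
      ∀ k : ZMod p, quadGaussSum (k * (q : ZMod p)) = quadGaussSum (k * (q' : ZMod p)) := by
  simp only [dwInvariant_eq_inv_mul_quadGaussSum,
    mul_right_inj' (inv_ne_zero (NeZero.ne (p : ℂ)))]
  exact ⟨fun h k => natCast_zmod_val k ▸ h k.val, fun h k => h k⟩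

lemma forall_dwInvariant_eq_iff_exists_sq {p : ℕ} [NeZero p] {q q' : ℤ} (hq : IsCoprime q p)
    (hq' : IsCoprime q' p) :
    (∀ k : ℕ, dwInvariant k p q = dwInvariant k p q') ↔
      ∃ a : ℤ, q * q' ≡ a ^ 2 [ZMOD p] := by
  rw [forall_dwInvariant_eq_iff, forall_quadGaussSum_mul_eq_iff
    ((coe_int_isUnit_iff_isCoprime q p).2 hq.symm) ((coe_int_isUnit_iff_isCoprime q' p).2 hq'.symm),
    intCast_surjective.exists]
  simp only [← ZMod.intCast_eq_intCast_iff, Int.cast_mul, Int.cast_pow]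

theorem lens_space_invariants_classify (p p' : ℕ) (hp : 0 < p) (hp' : 0 < p')
    (q q' : ℤ) (hq : IsCoprime q (p : ℤ)) (hq' : IsCoprime q' (p' : ℤ)) :
    (∀ k : ℕ, dwInvariant k p q = dwInvariant k p' q') ↔
      (p = p' ∧ ∃ a : ℤ, q * q' ≡ a ^ 2 [ZMOD (p : ℤ)]) := by
  have := NeZero.of_pos hp
  constructor
  · intro H
    obtain rfl : p = p' := Nat.dvd_antisymm
      ((dwInvariant_eq_one_iff hp hq).1 (by rw [H, (dwInvariant_eq_one_iff hp' hq').2 dvd_rfl]))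
      ((dwInvariant_eq_one_iff hp' hq').1 (by rw [← H, (dwInvariant_eq_one_iff hp hq).2 dvd_rfl]))
    exact ⟨rfl, (forall_dwInvariant_eq_iff_exists_sq hq hq').1 H⟩
  · rintro ⟨rfl, hsq⟩
    exact (forall_dwInvariant_eq_iff_exists_sq hq hq').2 hsq
end

section
/- Let p ≥ 2 be an integer with 2-adic valuation k, and let q, q' be integers coprime to p. Then qq' is a square modulo p if and only if all of the following hold: (i) for every odd prime s dividing p, the Legendre symbols satisfy (q|s) = (q'|s); (ii) if k = 2 then q ≡ q' (mod 4); (iii) if k ≥ 3 then q ≡ q' (mod 8). -/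
private lemma sq_zmod_iff (n : ℕ) (x : ℤ) :
    (∃ a : ℤ, x ≡ a ^ 2 [ZMOD (n : ℤ)]) ↔ IsSquare ((x : ZMod n)) := by
  constructor
  · rintro ⟨a, ha⟩
    rw [← ZMod.intCast_eq_intCast_iff] at ha
    exact ⟨(a : ZMod n), by rw [ha]; push_cast; ring⟩
  · rintro ⟨b, hb⟩
    refine ⟨(b.cast : ℤ), ?_⟩
    rw [← ZMod.intCast_eq_intCast_iff]
    push_cast
    rw [hb]
    ring

private lemma sq_crt {m n : ℕ} (h : Nat.Coprime m n) (x : ℤ) :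
    IsSquare ((x : ZMod (m * n))) ↔ IsSquare ((x : ZMod m)) ∧ IsSquare ((x : ZMod n)) := by
  let e := ZMod.chineseRemainder h
  have hx : ((x : ZMod m × ZMod n)) = ((x : ZMod m), (x : ZMod n)) := by
    ext <;> simp
  constructor
  · rintro ⟨b, hb⟩
    have h1 : ((x : ZMod m), (x : ZMod n)) = e b * e b := by
      rw [← hx, ← map_intCast (e : ZMod (m * n) ≃+* ZMod m × ZMod n) x, hb, map_mul]
    exact ⟨⟨(e b).1, by simpa using congrArg Prod.fst h1⟩,
           ⟨(e b).2, by simpa using congrArg Prod.snd h1⟩⟩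
  · rintro ⟨⟨c, hc⟩, ⟨d, hd⟩⟩
    refine ⟨e.symm (c, d), ?_⟩
    have h2 : ((x : ℤ) : ZMod (m * n)) = e.symm ((x : ZMod m), (x : ZMod n)) := by
      rw [← hx, map_intCast]
    rw [h2, hc, hd, ← map_mul]
    rfl

private lemma cast_ne_zero_of_coprime {s : ℕ} (hs : s.Prime) {x : ℤ}
    (hx : IsCoprime x (s : ℤ)) : (x : ZMod s) ≠ 0 := by
  intro h
  rw [ZMod.intCast_zmod_eq_zero_iff_dvd] at h
  have hu : IsUnit ((s : ℕ) : ℤ) := hx.isUnit_of_dvd' h dvd_rfl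
  rcases Int.isUnit_iff.mp hu with h1 | h1
  · have : s = 1 := by exact_mod_cast h1
    exact hs.ne_one this
  · have : (0 : ℤ) ≤ (s : ℤ) := Int.natCast_nonneg s
    omega

private lemma sq_lift_odd {s : ℕ} (hs : s.Prime) (hodd : Odd s) {x : ℤ}
    (hx : IsCoprime x (s : ℤ)) (e : ℕ) (h : ∃ a : ℤ, x ≡ a ^ 2 [ZMOD (s : ℤ)]) :
    ∃ a : ℤ, x ≡ a ^ 2 [ZMOD (s : ℤ) ^ e] := by
  induction e with
  | zero => exact ⟨0, by rw [pow_zero]; exact Int.modEq_one⟩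
  | succ e ih =>
    rcases Nat.eq_zero_or_pos e with he | he
    · subst he
      obtain ⟨a, ha⟩ := h
      exact ⟨a, by rwa [pow_one]⟩
    obtain ⟨a, ha⟩ := ih
    rw [Int.modEq_iff_dvd] at ha
    obtain ⟨c, hc⟩ := ha
    obtain ⟨e', rfl⟩ : ∃ e', e = e' + 1 := ⟨e - 1, by omega⟩
    have hax : IsCoprime a (s : ℤ) := by
      have h1 : IsCoprime (a ^ 2) (s : ℤ) := by
        have h2 : a ^ 2 = x + (s : ℤ) * ((s : ℤ) ^ e' * c) := by linear_combination hc
        rw [h2]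
        exact hx.add_mul_left_left _
      rw [sq] at h1
      exact h1.of_mul_left_left
    have h2s : IsCoprime (2 : ℤ) (s : ℤ) := by
      have : Nat.Coprime 2 s := (Nat.prime_two.coprime_iff_not_dvd).mpr
        (by rw [Nat.odd_iff] at hodd; omega)
      exact_mod_cast Nat.isCoprime_iff_coprime.mpr this
    have h2a : IsCoprime (2 * a) (s : ℤ) := h2s.mul_left hax
    obtain ⟨u, v, huv⟩ := h2a
    refine ⟨a - c * u * (s : ℤ) ^ (e' + 1), ?_⟩
    rw [Int.modEq_iff_dvd]
    have key : (a - c * u * (s : ℤ) ^ (e' + 1)) ^ 2 - x =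
        (s : ℤ) ^ (e' + 1 + 1) * (c * v) + (c * u) ^ 2 * ((s : ℤ) ^ (e' + 1)) ^ 2 := by
      linear_combination hc - (s : ℤ) ^ (e' + 1) * c * huv
    rw [key]
    refine dvd_add (dvd_mul_right _ _) (Dvd.dvd.mul_left ?_ _)
    rw [← pow_mul]
    exact pow_dvd_pow _ (by omega)

private lemma odd_of_sq_modeq {x a : ℤ} (hx : Odd x) (h : (2 : ℤ) ∣ a ^ 2 - x) : Odd a := by
  rcases Int.even_or_odd a with he | ho
  · exfalso
    have h1 : Even (a ^ 2) := Int.even_pow.mpr ⟨he, by norm_num⟩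
    have h2 : Even (a ^ 2 - x) := by
      obtain ⟨t, ht⟩ := h
      exact ⟨t, by linarith⟩
    have h3 : Even x := by simpa using h1.sub h2
    exact (Int.not_odd_iff_even.mpr h3) hx
  · exact ho

private lemma sq_lift_two {x : ℤ} (hx : Odd x) (h8 : x ≡ 1 [ZMOD 8]) (e : ℕ) :
    ∃ a : ℤ, x ≡ a ^ 2 [ZMOD (2 : ℤ) ^ e] := by
  induction e with
  | zero => exact ⟨1, by rw [pow_zero]; exact Int.modEq_one⟩
  | succ e ih =>
    rcases le_or_gt (e + 1) 3 with he | he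
    · refine ⟨1, ?_⟩
      have hdvd : ((2 : ℤ)) ^ (e + 1) ∣ 8 := by
        calc ((2 : ℤ)) ^ (e + 1) ∣ (2 : ℤ) ^ 3 := pow_dvd_pow _ he
          _ = 8 := by norm_num
      simpa using Int.ModEq.of_dvd hdvd h8
    · obtain ⟨a, ha⟩ := ih
      rw [Int.modEq_iff_dvd] at ha
      obtain ⟨c, hc⟩ := ha
      have haodd : Odd a := by
        apply odd_of_sq_modeq hx
        refine dvd_trans ?_ ⟨c, hc⟩
        exact dvd_pow_self 2 (by omega)
      obtain ⟨f, rfl⟩ : ∃ f, e = f + 2 := ⟨e - 2, by omega⟩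
      refine ⟨a + c * 2 ^ (f + 1), ?_⟩
      rw [Int.modEq_iff_dvd]
      obtain ⟨d, hd⟩ := haodd
      have key : (a + c * 2 ^ (f + 1)) ^ 2 - x =
          (2 : ℤ) ^ (f + 3) * (c * (d + 1)) + c ^ 2 * ((2 : ℤ) ^ (f + 1)) ^ 2 := by
        linear_combination hc + 2 ^ (f + 2) * c * hd
      rw [key]
      refine dvd_add (dvd_mul_right _ _) (Dvd.dvd.mul_left ?_ _)
      rw [← pow_mul]
      exact pow_dvd_pow _ (by omega)

private lemma eight_dvd_sq_sub_one {a : ℤ} (ha : Odd a) : (8 : ℤ) ∣ a ^ 2 - 1 := by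
  obtain ⟨d, hd⟩ := ha
  obtain ⟨t, ht⟩ := Int.even_mul_succ_self d
  exact ⟨t, by linear_combination (a + 2 * d + 1) * hd + 4 * ht⟩

private lemma odd_of_coprime_two {q : ℤ} (h : IsCoprime q 2) : Odd q := by
  rcases Int.even_or_odd q with ⟨r, hr⟩ | ho
  · exfalso
    have hu : IsUnit (2 : ℤ) := h.isUnit_of_dvd' ⟨r, by linarith⟩ dvd_rfl
    rcases Int.isUnit_iff.mp hu with h1 | h1 <;> norm_num at h1
  · exact ho

private lemma sq_two_pow_iff (k : ℕ) {x : ℤ} (hx : 1 ≤ k → Odd x) :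
    (∃ a : ℤ, x ≡ a ^ 2 [ZMOD ((2 ^ k : ℕ) : ℤ)]) ↔
      ((k = 2 → x ≡ 1 [ZMOD (4 : ℤ)]) ∧ (3 ≤ k → x ≡ 1 [ZMOD (8 : ℤ)])) := by
  have hcast : ((2 ^ k : ℕ) : ℤ) = (2 : ℤ) ^ k := by push_cast; ring
  rw [hcast]
  rcases Nat.lt_or_ge k 2 with hk2 | hk2
  · constructor
    · intro _
      exact ⟨by omega, by omega⟩
    · intro _
      interval_cases k
      · exact ⟨1, by rw [pow_zero]; exact Int.modEq_one⟩
      · obtain ⟨d, hd⟩ := hx le_rfl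
        refine ⟨1, ?_⟩
        rw [Int.modEq_iff_dvd]
        exact ⟨-d, by linear_combination -hd⟩
  rcases Nat.lt_or_ge k 3 with hk3 | hk3
  · have hkk : k = 2 := by omega
    subst hkk
    have hxodd := hx (by omega)
    constructor
    · rintro ⟨a, ha⟩
      refine ⟨fun _ => ?_, by omega⟩
      rw [Int.modEq_iff_dvd] at ha
      have haodd : Odd a := by
        apply odd_of_sq_modeq hxodd
        exact dvd_trans (by norm_num) ha
      have h8 := eight_dvd_sq_sub_one haodd
      have h4 : (4 : ℤ) ∣ a ^ 2 - 1 := dvd_trans (by norm_num) h8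
      have h4' : (4 : ℤ) ∣ a ^ 2 - x := by
        have h22 : ((2 : ℤ)) ^ 2 = 4 := by norm_num
        rwa [h22] at ha
      rw [Int.modEq_iff_dvd]
      obtain ⟨c1, e1⟩ := h4'
      obtain ⟨c2, e2⟩ := h4
      exact ⟨c1 - c2, by linarith⟩
    · rintro ⟨h4, -⟩
      have h4 := h4 rfl
      refine ⟨1, ?_⟩
      rw [show ((2 : ℤ) ^ 2) = 4 by norm_num, one_pow]
      exact h4
  · have hxodd := hx (by omega)
    constructor
    · rintro ⟨a, ha⟩
      refine ⟨by omega, fun _ => ?_⟩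
      have h8dvd : ((2 : ℤ)) ^ 3 ∣ (2 : ℤ) ^ k := pow_dvd_pow _ hk3
      have ha8 : x ≡ a ^ 2 [ZMOD (8 : ℤ)] := by
        have h := Int.ModEq.of_dvd h8dvd ha
        rwa [show ((2 : ℤ) ^ 3) = 8 from by norm_num] at h
      rw [Int.modEq_iff_dvd] at ha8 ⊢
      have haodd : Odd a := by
        apply odd_of_sq_modeq hxodd
        exact dvd_trans (by norm_num) ha8
      obtain ⟨c1, e1⟩ := ha8
      obtain ⟨c2, e2⟩ := eight_dvd_sq_sub_one haodd
      exact ⟨c1 - c2, by linarith⟩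
    · rintro ⟨-, h8⟩
      exact sq_lift_two hxodd (h8 hk3) k

private lemma sq_odd_prime_pow {s : ℕ} (hs : s.Prime) (hodd : Odd s) {e : ℕ} (he : 1 ≤ e)
    {x : ℤ} (hx : IsCoprime x (s : ℤ)) :
    (∃ a : ℤ, x ≡ a ^ 2 [ZMOD ((s ^ e : ℕ) : ℤ)]) ↔ @legendreSym s ⟨hs⟩ x = 1 := by
  haveI : Fact s.Prime := ⟨hs⟩
  have hcast : ((s ^ e : ℕ) : ℤ) = (s : ℤ) ^ e := by push_cast; ring
  rw [hcast]
  have hne : (x : ZMod s) ≠ 0 := cast_ne_zero_of_coprime hs hx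
  constructor
  · rintro ⟨a, ha⟩
    have h1 : x ≡ a ^ 2 [ZMOD (s : ℤ)] :=
      Int.ModEq.of_dvd (dvd_pow_self _ (by omega)) ha
    rw [legendreSym.eq_one_iff s hne]
    exact (sq_zmod_iff s x).mp ⟨a, h1⟩
  · intro h
    have h1 := (legendreSym.eq_one_iff s hne).mp h
    exact sq_lift_odd hs hodd hx e ((sq_zmod_iff s x).mpr h1)

private lemma sq_odd_part : ∀ m : ℕ, Odd m → ∀ x : ℤ, IsCoprime x (m : ℤ) →
    ((∃ a : ℤ, x ≡ a ^ 2 [ZMOD (m : ℤ)]) ↔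
      ∀ s : ℕ, (hs : s.Prime) → s ∣ m → @legendreSym s ⟨hs⟩ x = 1) := by
  intro m
  induction m using Nat.strong_induction_on with
  | _ m ih =>
    intro hm x hx
    rcases eq_or_ne m 1 with rfl | hm1
    · constructor
      · intro _ s hs hdvd
        exact absurd (Nat.dvd_one.mp hdvd) hs.ne_one
      · intro _
        exact ⟨0, by rw [Nat.cast_one]; exact Int.modEq_one⟩
    · have hm0 : m ≠ 0 := by rintro rfl; simp at hm
      set s := m.minFac with hsdef
      have hs : s.Prime := Nat.minFac_prime hm1
      have hsm : s ∣ m := Nat.minFac_dvd m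
      set e := m.factorization s with hedef
      set m' := m / s ^ e with hm'def
      have hme : s ^ e * m' = m := Nat.ordProj_mul_ordCompl_eq_self m s
      have he1 : 1 ≤ e := hs.factorization_pos_of_dvd hm0 hsm
      have hcop : Nat.Coprime (s ^ e) m' := (Nat.coprime_ordCompl hs hm0).pow_left e
      have hm'dvd : m' ∣ m := Nat.ordCompl_dvd m s
      have hm'odd : Odd m' := by
        obtain ⟨t, ht⟩ := hm'dvd
        rcases Nat.even_or_odd m' with hev | hod
        · exfalso; rw [ht] at hm; exact (Nat.not_odd_iff_even.mpr (hev.mul_right t)) hm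
        · exact hod
      have hm'lt : m' < m := by
        have hgt : 1 < s ^ e := Nat.one_lt_pow (by omega) hs.one_lt
        exact Nat.div_lt_self (Nat.pos_of_ne_zero hm0) hgt
      have hsodd : Odd s := by
        obtain ⟨t, ht⟩ := hsm
        rcases Nat.even_or_odd s with hev | hod
        · exfalso; rw [ht] at hm; exact (Nat.not_odd_iff_even.mpr (hev.mul_right t)) hm
        · exact hod
      have hxs : IsCoprime x (s : ℤ) :=
        hx.of_isCoprime_of_dvd_right (Int.natCast_dvd_natCast.mpr hsm)
      have hxm' : IsCoprime x ((m' : ℕ) : ℤ) :=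
        hx.of_isCoprime_of_dvd_right (Int.natCast_dvd_natCast.mpr hm'dvd)
      have key : (∃ a : ℤ, x ≡ a ^ 2 [ZMOD (m : ℤ)]) ↔
          ((∃ a : ℤ, x ≡ a ^ 2 [ZMOD ((s ^ e : ℕ) : ℤ)]) ∧
            (∃ a : ℤ, x ≡ a ^ 2 [ZMOD ((m' : ℕ) : ℤ)])) := by
        rw [sq_zmod_iff, sq_zmod_iff, sq_zmod_iff, ← hme]
        exact sq_crt hcop x
      rw [key, sq_odd_prime_pow hs hsodd he1 hxs, ih m' hm'lt hm'odd x hxm']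
      constructor
      · rintro ⟨h1, h2⟩ r hr hrm
        by_cases hrs : r = s
        · subst hrs; exact h1
        · have hrm' : r ∣ m' := by
            have hco : Nat.Coprime r s := (Nat.coprime_primes hr hs).mpr hrs
            have hdvd : r ∣ s ^ e * m' := by rw [hme]; exact hrm
            exact (hco.pow_right e).dvd_of_dvd_mul_left hdvd
          exact h2 r hr hrm'
      · intro h
        exact ⟨h s hs hsm, fun r hr hrm' => h r hr (hrm'.trans hm'dvd)⟩

private lemma leg_mul_eq_one {s : ℕ} (hs : s.Prime) {q q' : ℤ}
    (h1 : (q : ZMod s) ≠ 0) (h2 : (q' : ZMod s) ≠ 0) :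
    (@legendreSym s ⟨hs⟩ (q * q') = 1 ↔ @legendreSym s ⟨hs⟩ q = @legendreSym s ⟨hs⟩ q') := by
  haveI : Fact s.Prime := ⟨hs⟩
  rw [legendreSym.mul]
  rcases legendreSym.eq_one_or_neg_one s h1 with h | h <;>
    rcases legendreSym.eq_one_or_neg_one s h2 with h' | h' <;>
      rw [h, h'] <;> norm_num

private lemma mul_modeq_one_iff {n q q' : ℤ} (hq2 : n ∣ q ^ 2 - 1) (hc : IsCoprime n q) :
    (q * q' ≡ 1 [ZMOD n] ↔ q ≡ q' [ZMOD n]) := by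
  rw [Int.modEq_iff_dvd, Int.modEq_iff_dvd]
  constructor
  · intro h
    have hmul : n ∣ q * (q' - q) := by
      obtain ⟨c1, e1⟩ := h
      obtain ⟨c2, e2⟩ := hq2
      exact ⟨-c1 - c2, by linear_combination -e1 - e2⟩
    exact hc.dvd_of_dvd_mul_left hmul
  · intro h
    obtain ⟨c1, e1⟩ := h
    obtain ⟨c2, e2⟩ := hq2
    exact ⟨-q * c1 - c2, by linear_combination -q * e1 - e2⟩

set_option maxHeartbeats 2000000 in
theorem square_mod_p_criterion (p : ℕ) (hp : 2 ≤ p) (k : ℕ) (hk : k = p.factorization 2)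
    (q q' : ℤ) (hq : IsCoprime q (p : ℤ)) (hq' : IsCoprime q' (p : ℤ)) :
    (∃ a : ℤ, q * q' ≡ a ^ 2 [ZMOD (p : ℤ)]) ↔
      ((∀ s : ℕ, (hs : s.Prime) → Odd s → s ∣ p →
          @legendreSym s ⟨hs⟩ q = @legendreSym s ⟨hs⟩ q') ∧
        (k = 2 → q ≡ q' [ZMOD (4 : ℤ)]) ∧
        (3 ≤ k → q ≡ q' [ZMOD (8 : ℤ)])) := by
  have hp0 : p ≠ 0 := by omega
  set x := q * q' with hxdef
  have hx : IsCoprime x (p : ℤ) := hq.mul_left hq'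
  set m' := p / 2 ^ k with hm'def
  have hme : 2 ^ k * m' = p := by
    rw [hm'def, hk]; exact Nat.ordProj_mul_ordCompl_eq_self p 2
  have hcop : Nat.Coprime (2 ^ k) m' := by
    rw [hm'def, hk]; exact (Nat.coprime_ordCompl Nat.prime_two hp0).pow_left _
  have hm'dvd : m' ∣ p := by
    rw [hm'def, hk]; exact Nat.ordCompl_dvd p 2
  have hm'odd : Odd m' := by
    have h2 : ¬ 2 ∣ m' := by
      rw [hm'def, hk]; exact Nat.not_dvd_ordCompl Nat.prime_two hp0
    rw [Nat.odd_iff]; omega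
  have hxm' : IsCoprime x ((m' : ℕ) : ℤ) :=
    hx.of_isCoprime_of_dvd_right (Int.natCast_dvd_natCast.mpr hm'dvd)
  have hdvd2 : ∀ j : ℕ, j ≤ k → ((2 ^ j : ℕ) : ℤ) ∣ (p : ℤ) := by
    intro j hj
    refine Int.natCast_dvd_natCast.mpr (dvd_trans (pow_dvd_pow 2 hj) ?_)
    rw [hk]; exact Nat.ordProj_dvd p 2
  have hq2 : 1 ≤ k → (Odd q ∧ Odd q') := by
    intro h1
    have hdvd : ((2 : ℤ)) ∣ (p : ℤ) := by
      have := hdvd2 1 h1; simpa using this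
    constructor
    · exact odd_of_coprime_two (hq.of_isCoprime_of_dvd_right hdvd)
    · exact odd_of_coprime_two (hq'.of_isCoprime_of_dvd_right hdvd)
  have hxoddh : 1 ≤ k → Odd x := by
    intro h1
    obtain ⟨ho1, ho2⟩ := hq2 h1
    exact ho1.mul ho2
  have main : (∃ a : ℤ, x ≡ a ^ 2 [ZMOD (p : ℤ)]) ↔
      ((∃ a : ℤ, x ≡ a ^ 2 [ZMOD ((2 ^ k : ℕ) : ℤ)]) ∧
        (∃ a : ℤ, x ≡ a ^ 2 [ZMOD ((m' : ℕ) : ℤ)])) := by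
    rw [sq_zmod_iff, sq_zmod_iff, sq_zmod_iff, ← hme]
    exact sq_crt hcop x
  rw [main, sq_two_pow_iff _ hxoddh, sq_odd_part m' hm'odd x hxm']
  have hB : (∀ s : ℕ, (hs : s.Prime) → s ∣ m' → @legendreSym s ⟨hs⟩ x = 1) ↔
      (∀ s : ℕ, (hs : s.Prime) → Odd s → s ∣ p →
        @legendreSym s ⟨hs⟩ q = @legendreSym s ⟨hs⟩ q') := by
    constructor
    · intro h s hs hsodd hsp
      have hqs : IsCoprime q (s : ℤ) :=
        hq.of_isCoprime_of_dvd_right (Int.natCast_dvd_natCast.mpr hsp)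
      have hq's : IsCoprime q' (s : ℤ) :=
        hq'.of_isCoprime_of_dvd_right (Int.natCast_dvd_natCast.mpr hsp)
      have hsm' : s ∣ m' := by
        have hco : Nat.Coprime s (2 ^ k) :=
          (((Nat.prime_two.coprime_iff_not_dvd).mpr
            (by rw [Nat.odd_iff] at hsodd; omega)).symm).pow_right _
        exact hco.dvd_of_dvd_mul_left (by rw [hme]; exact hsp)
      have h1 := h s hs hsm'
      rw [← leg_mul_eq_one hs (cast_ne_zero_of_coprime hs hqs)
        (cast_ne_zero_of_coprime hs hq's)]
      exact h1
    · intro h s hs hsm'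
      have hsp : s ∣ p := hsm'.trans hm'dvd
      have hsodd : Odd s := by
        obtain ⟨t, ht⟩ := hsm'
        rcases Nat.even_or_odd s with hev | hod
        · exfalso; rw [ht] at hm'odd
          exact (Nat.not_odd_iff_even.mpr (hev.mul_right t)) hm'odd
        · exact hod
      have hqs : IsCoprime q (s : ℤ) :=
        hq.of_isCoprime_of_dvd_right (Int.natCast_dvd_natCast.mpr hsp)
      have hq's : IsCoprime q' (s : ℤ) :=
        hq'.of_isCoprime_of_dvd_right (Int.natCast_dvd_natCast.mpr hsp)
      rw [hxdef, leg_mul_eq_one hs (cast_ne_zero_of_coprime hs hqs)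
        (cast_ne_zero_of_coprime hs hq's)]
      exact h s hs hsodd hsp
  have hA2 : (k = 2 → x ≡ 1 [ZMOD (4 : ℤ)]) ↔
      (k = 2 → q ≡ q' [ZMOD (4 : ℤ)]) := by
    apply imp_congr_right
    intro hk2
    have h4p : ((4 : ℤ)) ∣ (p : ℤ) := by
      have := hdvd2 2 (by omega); simpa using this
    have hq4 : IsCoprime q (4 : ℤ) := hq.of_isCoprime_of_dvd_right h4p
    obtain ⟨hqodd, _⟩ := hq2 (by omega)
    rw [hxdef]
    exact mul_modeq_one_iff
      (dvd_trans (by norm_num) (eight_dvd_sq_sub_one hqodd)) hq4.symm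
  have hA3 : (3 ≤ k → x ≡ 1 [ZMOD (8 : ℤ)]) ↔
      (3 ≤ k → q ≡ q' [ZMOD (8 : ℤ)]) := by
    apply imp_congr_right
    intro hk3
    have h8p : ((8 : ℤ)) ∣ (p : ℤ) := by
      have := hdvd2 3 (by omega); simpa using this
    have hq8 : IsCoprime q (8 : ℤ) := hq.of_isCoprime_of_dvd_right h8p
    obtain ⟨hqodd, _⟩ := hq2 (by omega)
    rw [hxdef]
    exact mul_modeq_one_iff (eight_dvd_sq_sub_one hqodd) hq8.symm
  rw [hB, hA2, hA3]
  tauto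
end

section
/- Let p be a positive integer and let k, r, l be integers. Then ∏_{j=1}^{p} exp(2πi·k·{l/p}·({j·r·l/p} + {r·l/p} − {(j+1)·r·l/p})) = exp(2πi·k·r·l²/p), where {x} denotes the fractional part of x. (In the notation ω_k(a,b,c) = exp(2πi·k·{a}·({b}+{c}−{b+c})), this says that for the p-th root of unity ν = e^{2πi l/p} one has ∏_{j=1}^{p} ω_k(ν, ν^{jr}, ν^{r}) = e^{2πi k r l²/p}, which is the state-sum evaluation of the level-k U(1) Dijkgraaf–Witten invariant of the lens space on the Altschuler–Coste colouring of its standard triangulation.) -/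
/-! Since `{(p + 1) m / p} = {m / p}` for an integer `m`, the carries
`{j m / p} + {m / p} - {(j + 1) m / p}` telescope over `j = 1, …, p` to `p {m / p}`, so the product
is `exp (2πik · p {l / p} {r l / p})`. Writing `{x / p} = (x - p ⌊x / p⌋) / p` shows that
`p {l / p} {r l / p}` differs from `r l² / p` by an integer, which the exponential does not see. -/

open Complex Finset
open scoped Real

theorem Finset.sum_Icc_add_sub_succ {M : Type*} [AddCommGroup M] (f : ℕ → M) (c : M) (n : ℕ) :
    ∑ j ∈ Icc 1 n, (f j + c - f (j + 1)) = n • c + f 1 - f (n + 1) := by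
  induction n with
  | zero => simp
  | succ n ih =>
    rw [sum_Icc_succ_top (by omega), ih, succ_nsmul]
    abel

section FloorField

variable {R : Type*} [Field R] [LinearOrder R] [FloorRing R]

theorem Int.exists_mul_fract_div_mul_fract_div {p : ℤ} (hp : p ≠ 0) (a b : ℤ) :
    ∃ n : ℤ, (p : R) * Int.fract ((a : R) / p) * Int.fract ((b : R) / p) = a * b / p + n := by
  refine ⟨p * ⌊(a : R) / p⌋ * ⌊(b : R) / p⌋ - ⌊(a : R) / p⌋ * b - a * ⌊(b : R) / p⌋, ?_⟩
  have hpR : (p : R) ≠ 0 := Int.cast_ne_zero.mpr hp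
  rw [← Int.self_sub_floor, ← Int.self_sub_floor]
  push_cast
  field_simp
  ring

variable [IsOrderedRing R]

theorem Int.fract_add_one_mul_div {p : R} (hp : p ≠ 0) (m : ℤ) :
    Int.fract ((p + 1) * m / p) = Int.fract (m / p) := by
  rw [add_mul, add_div, mul_div_cancel_left₀ _ hp, one_mul, Int.fract_intCast_add]

theorem Int.sum_fract_carry_mul_div {p : ℕ} (hp : p ≠ 0) (m : ℤ) :
    ∑ j ∈ Icc 1 p, (Int.fract ((j : R) * m / p) + Int.fract ((m : R) / p) -
      Int.fract (((j : R) + 1) * m / p)) = p * Int.fract ((m : R) / p) := by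
  have hpR : (p : R) ≠ 0 := Nat.cast_ne_zero.mpr hp
  simpa [Int.fract_add_one_mul_div hpR, nsmul_eq_mul] using
    sum_Icc_add_sub_succ (fun j : ℕ => Int.fract ((j : R) * m / p)) (Int.fract ((m : R) / p)) p

end FloorField

theorem Complex.exp_two_pi_I_int_mul_add_int (k n : ℤ) (x : ℂ) :
    exp (2 * π * I * k * (x + n)) = exp (2 * π * I * k * x) := by
  have h : exp (2 * π * I * k * n) = 1 := by
    rw [← exp_int_mul_two_pi_mul_I (k * n)]
    push_cast
    ring_nf
  rw [mul_add, exp_add, h, mul_one]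

theorem altschuler_coste_state_sum (p : ℕ) (hp : 0 < p) (k r l : ℤ) :
    (∏ j ∈ Finset.Icc (1:ℕ) p,
        Complex.exp (2 * Real.pi * Complex.I * (k : ℂ) *
          ((Int.fract ((l : ℝ) / (p : ℝ)) : ℝ) : ℂ) *
          (((Int.fract ((j : ℝ) * (r : ℝ) * (l : ℝ) / (p : ℝ)) : ℝ) : ℂ) +
            ((Int.fract ((r : ℝ) * (l : ℝ) / (p : ℝ)) : ℝ) : ℂ) -
            ((Int.fract (((j : ℝ) + 1) * (r : ℝ) * (l : ℝ) / (p : ℝ)) : ℝ) : ℂ)))) =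
      Complex.exp (2 * Real.pi * Complex.I * (k : ℂ) * (r : ℂ) * (l : ℂ) ^ 2 / (p : ℂ)) := by
  have hcarry := congrArg ((↑) : ℝ → ℂ) (Int.sum_fract_carry_mul_div (R := ℝ) hp.ne' (r * l))
  obtain ⟨n, hn⟩ := Int.exists_mul_fract_div_mul_fract_div (R := ℝ) (p := p) (by omega) l (r * l)
  push_cast at hcarry hn
  calc _ = exp (2 * π * I * k *
          ((p * Int.fract ((l : ℝ) / p) * Int.fract ((r * l : ℝ) / p) : ℝ) : ℂ)) := by
        rw [← exp_sum, ← mul_sum]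
        congr 1
        simp only [mul_assoc] at hcarry ⊢
        rw [hcarry]
        push_cast
        ring
    _ = exp (2 * π * I * k * ((l * (r * l) / p + n : ℝ) : ℂ)) := by rw [hn]
    _ = _ := by
      push_cast
      rw [exp_two_pi_I_int_mul_add_int]
      congr 1
      ring
end
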